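/- Suppose P₁, …, Pₙ are polynomials in the variables x₁, …, xₙ with real coefficients which satisfy ∂Pᵢ/∂xᵢ = 0 for every i, and Pᵢ|_{xⱼ=0} = Pⱼ|_{xᵢ=0} for all i and j. Then there is a polynomial Q in x₁, …, xₙ such that Q|_{xᵢ=0} = Pᵢ for every i. -/
import Mathlib


/-! ## STATEMENT 6
If `P₁, …, Pₙ` are real polynomials in `x₁, …, xₙ` with `∂Pᵢ/∂xᵢ = 0` and
`Pᵢ|_{xⱼ=0} = Pⱼ|_{xᵢ=0}` for all `i, j`, then there is a polynomial `Q` with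
`Q|_{xᵢ=0} = Pᵢ` for all `i`. -/
open MvPolynomial

lemma aux_erase_monomial {n : ℕ} (i : Fin n) (d : Fin n →₀ ℕ) (a : ℝ) :
    MvPolynomial.aeval (fun k => if k = i then 0 else (MvPolynomial.X k : MvPolynomial (Fin n) ℝ))
      (monomial d a) = if d i = 0 then monomial d a else 0 := by
  rw [aeval_monomial]
  by_cases h : d i = 0
  · rw [if_pos h, monomial_eq]
    congr 1
    apply Finsupp.prod_congr
    intro k hk
    have hki : k ≠ i := by
      rintro rfl
      exact (Finsupp.mem_support_iff.mp hk) h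
    rw [if_neg hki]
  · have hi : i ∈ d.support := Finsupp.mem_support_iff.mpr h
    rw [if_neg h, Finsupp.prod, Finset.prod_eq_zero hi, mul_zero]
    simp [zero_pow h]

lemma aux_coeff_erase {n : ℕ} (i : Fin n) (p : MvPolynomial (Fin n) ℝ) (d : Fin n →₀ ℕ) :
    coeff d (MvPolynomial.aeval
      (fun k => if k = i then 0 else (MvPolynomial.X k : MvPolynomial (Fin n) ℝ)) p)
      = if d i = 0 then coeff d p else 0 := by
  conv_lhs => rw [p.as_sum, map_sum]
  rw [coeff_sum]
  have key : ∀ e ∈ p.support,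
      coeff d (MvPolynomial.aeval
        (fun k => if k = i then 0 else (MvPolynomial.X k : MvPolynomial (Fin n) ℝ))
        (monomial e (coeff e p)))
      = if e = d then (if d i = 0 then coeff d p else 0) else 0 := by
    intro e _
    rw [aux_erase_monomial]
    by_cases hed : e = d
    · subst hed
      by_cases hdi : e i = 0 <;> simp [hdi, coeff_monomial]
    · by_cases hdi : e i = 0 <;> simp [hdi, coeff_monomial, hed]
  rw [Finset.sum_congr rfl key, Finset.sum_ite_eq' p.support d]
  by_cases hd : d ∈ p.support
  · rw [if_pos hd]
  · rw [if_neg hd, notMem_support_iff.mp hd]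
    simp

lemma aux_coeff_zero_of_pderiv {n : ℕ} (i : Fin n) (p : MvPolynomial (Fin n) ℝ)
    (h : MvPolynomial.pderiv i p = 0) (d : Fin n →₀ ℕ) (hd : d i ≠ 0) : coeff d p = 0 := by
  by_contra hc
  have hds : d ∈ p.support := mem_support_iff.mpr hc
  have h0 : coeff (d - Finsupp.single i 1) (MvPolynomial.pderiv i p) = 0 := by rw [h]; simp
  rw [show (p : MvPolynomial (Fin n) ℝ) = ∑ e ∈ p.support, monomial e (coeff e p) from p.as_sum,
    map_sum, coeff_sum] at h0
  have key : ∀ e ∈ p.support, e ≠ d →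
      coeff (d - Finsupp.single i 1) (MvPolynomial.pderiv i (monomial e (coeff e p))) = 0 := by
    intro e _ hed
    rw [pderiv_monomial, coeff_monomial]
    by_cases hei : e i = 0
    · simp [hei]
    · have hne : e - Finsupp.single i 1 ≠ d - Finsupp.single i 1 := by
        intro heq
        apply hed
        ext j
        have hj := DFunLike.congr_fun heq j
        rw [Finsupp.tsub_apply, Finsupp.tsub_apply] at hj
        by_cases hji : j = i
        · subst hji
          simp [Finsupp.single_apply] at hj
          omega
        · simp only [Finsupp.single_apply, if_neg (fun h : i = j => hji h.symm),
            Nat.sub_zero] at hj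
          exact hj
      rw [if_neg hne]
  rw [Finset.sum_eq_single_of_mem d hds key] at h0
  rw [pderiv_monomial, coeff_monomial, if_pos rfl] at h0
  exact hc (by
    have : (d i : ℝ) ≠ 0 := Nat.cast_ne_zero.mpr hd
    exact (mul_eq_zero.mp h0).resolve_right this)

theorem exists_common_extension_of_compatible_polynomials (n : ℕ)
    (P : Fin n → MvPolynomial (Fin n) ℝ)
    (h1 : ∀ i : Fin n, MvPolynomial.pderiv i (P i) = 0)
    (h2 : ∀ i j : Fin n,
      MvPolynomial.aeval (fun k => if k = j then 0 else (MvPolynomial.X k : MvPolynomial (Fin n) ℝ)) (P i)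
        = MvPolynomial.aeval (fun k => if k = i then 0 else (MvPolynomial.X k : MvPolynomial (Fin n) ℝ)) (P j)) :
    ∃ Q : MvPolynomial (Fin n) ℝ, ∀ i : Fin n,
      MvPolynomial.aeval (fun k => if k = i then 0 else (MvPolynomial.X k : MvPolynomial (Fin n) ℝ)) Q = P i := by
  classical
  have compat : ∀ (i j : Fin n) (d : Fin n →₀ ℕ), d i = 0 → d j = 0 →
      coeff d (P i) = coeff d (P j) := by
    intro i j d hdi hdj
    have := congrArg (coeff d) (h2 i j)
    rw [aux_coeff_erase, aux_coeff_erase, if_pos hdj, if_pos hdi] at this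
    exact this
  set T : Finset (Fin n →₀ ℕ) := Finset.univ.biUnion (fun i => (P i).support) with hT
  set c : (Fin n →₀ ℕ) → ℝ :=
    fun d => if h : ∃ i, d i = 0 then coeff d (P h.choose) else 0 with hc
  refine ⟨∑ d ∈ T, monomial d (c d), fun i => ?_⟩
  apply MvPolynomial.ext
  intro d
  rw [aux_coeff_erase]
  have hQd : coeff d (∑ e ∈ T, monomial e (c e)) = if d ∈ T then c d else 0 := by
    rw [coeff_sum]
    have : ∀ e ∈ T, coeff d (monomial e (c e)) = if e = d then c d else 0 := by
      intro e _
      rw [coeff_monomial]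
      by_cases hed : e = d <;> simp [hed]
    rw [Finset.sum_congr rfl this, Finset.sum_ite_eq' T d]
  by_cases hdi : d i = 0
  · rw [if_pos hdi, hQd]
    by_cases hdT : d ∈ T
    · rw [if_pos hdT, hc]
      have hex : ∃ j, d j = 0 := ⟨i, hdi⟩
      simp only [hex, dif_pos]
      exact compat hex.choose i d hex.choose_spec hdi
    · rw [if_neg hdT]
      have : d ∉ (P i).support := fun hmem => hdT (Finset.mem_biUnion.mpr ⟨i, Finset.mem_univ i, hmem⟩)
      exact (notMem_support_iff.mp this).symm
  · rw [if_neg hdi]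
    exact (aux_coeff_zero_of_pderiv i (P i) (h1 i) d hdi).symm
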